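/- Correctness of pushing an aggregation into a fixpoint (rule PA): let φ be a bag homomorphism and δ an aggregation function compatible with φ. For a multiset R define the plain sequence T_0 = dedup(R), T_{n+1} = dedup(R + φ(T_n)) and the aggregated sequence S'_0 = δ(R), S'_{n+1} = δ(R + φ(S'_n)). Assume δ ∘ dedup = δ (δ is insensitive to duplicates) and that the plain sequence becomes stationary at N (T_{N+1} = T_N). Then the aggregated sequence becomes stationary at some M ≤ N and δ(T_N) = S'_M. -/
import Mathlib


/-- The fixpoint sequence with duplicate elimination:
`T 0 = dedup R`, `T (n+1) = dedup (R + φ (T n))`. -/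
def dedupSeq {τ : Type*} [DecidableEq τ] (φ : Multiset τ → Multiset τ)
    (R : Multiset τ) : ℕ → Multiset τ
  | 0 => R.dedup
  | n + 1 => (R + φ (dedupSeq φ R n)).dedup

/-- The aggregated fixpoint sequence:
`S' 0 = δ R`, `S' (n+1) = δ (R + φ (S' n))`. -/
def aggSeq {τ : Type*} (δ φ : Multiset τ → Multiset τ) (R : Multiset τ) :
    ℕ → Multiset τ
  | 0 => δ R
  | n + 1 => δ (R + φ (aggSeq δ φ R n))

/-- Correctness of pushing an aggregation into a fixpoint (rule PA): if the
plain (dedup) sequence becomes stationary at `N`, then the aggregated sequence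
becomes stationary at some `M ≤ N` with value `δ (T N)`. -/
theorem push_aggregation_into_fixpoint {τ : Type*} [DecidableEq τ]
    (φ δ : Multiset τ → Multiset τ)
    (hφ0 : φ 0 = 0) (hφadd : ∀ a b : Multiset τ, φ (a + b) = φ a + φ b)
    (hδ0 : δ 0 = 0) (hagg : ∀ a b : Multiset τ, δ (a + b) = δ (δ a + δ b))
    (hcompat : δ ∘ φ ∘ δ = δ ∘ φ)
    (hdedup : δ ∘ Multiset.dedup = δ)
    (R : Multiset τ) (N : ℕ)
    (hN : dedupSeq φ R (N + 1) = dedupSeq φ R N) :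
    ∃ M ≤ N, aggSeq δ φ R (M + 1) = aggSeq δ φ R M ∧
      δ (dedupSeq φ R N) = aggSeq δ φ R M := by
  have hded : ∀ m : Multiset τ, δ m.dedup = δ m := fun m =>
    congrFun hdedup m
  have hcomp : ∀ m : Multiset τ, δ (φ (δ m)) = δ (φ m) := fun m =>
    congrFun hcompat m
  have key : ∀ n, δ (dedupSeq φ R n) = aggSeq δ φ R n := by
    intro n
    induction n with
    | zero => simpa [dedupSeq, aggSeq] using hded R
    | succ n ih =>
      calc δ (dedupSeq φ R (n + 1))
          = δ (R + φ (dedupSeq φ R n)) := hded _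
        _ = δ (δ R + δ (φ (dedupSeq φ R n))) := hagg _ _
        _ = δ (δ R + δ (φ (δ (dedupSeq φ R n)))) := by rw [hcomp]
        _ = δ (δ R + δ (φ (aggSeq δ φ R n))) := by rw [ih]
        _ = δ (R + φ (aggSeq δ φ R n)) := (hagg _ _).symm
        _ = aggSeq δ φ R (n + 1) := rfl
  refine ⟨N, le_refl N, ?_, (key N)⟩
  calc aggSeq δ φ R (N + 1) = δ (dedupSeq φ R (N + 1)) := (key _).symm
    _ = δ (dedupSeq φ R N) := by rw [hN]
    _ = aggSeq δ φ R N := key N
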